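/- (Corollary 3.3) If m = 1 and K is nonempty, then the convex relaxation is tight: f_mom = f_max, i.e., sup{a_1 log ⟨p_1, z⟩ : z ∈ R_d(K), z_0 = 1} = sup_{x∈K} a_1 log p_1(x). -/

import Mathlib

open MvPolynomial Finset Filter Topology

noncomputable section

/-- Extended-real logarithm with the convention `log t = -∞` for `t ≤ 0`. -/
def elog (t : ℝ) : EReal := if 0 < t then ((Real.log t : ℝ) : EReal) else ⊥

/-- The degree `|α|` of a multi-index `α`. -/
def mdeg {n : ℕ} (α : Fin n →₀ ℕ) : ℕ := ∑ i, α i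

/-- The monomial vector `[x]_{2d}`, modeled as the function on multi-indices
whose `α`-entry is `x^α` for `|α| ≤ 2d` (and `0` above the truncation degree). -/
def monoVec {n : ℕ} (d : ℕ) (x : Fin n → ℝ) : (Fin n →₀ ℕ) → ℝ :=
  fun α => if mdeg α ≤ 2 * d then ∏ i, x i ^ α i else 0

/-- The pairing `⟨p, z⟩ = ∑_α p_α z_α`. -/
def pairing {n : ℕ} (p : MvPolynomial (Fin n) ℝ) (z : (Fin n →₀ ℕ) → ℝ) : ℝ :=
  ∑ α ∈ p.support, p.coeff α * z α

/-- The moment cone `R_d(S)`. -/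
def momentCone {n : ℕ} (d : ℕ) (S : Set (Fin n → ℝ)) : Set ((Fin n →₀ ℕ) → ℝ) :=
  {z | ∃ (l : ℕ) (lam : Fin l → ℝ) (v : Fin l → (Fin n → ℝ)),
    (∀ j, 0 ≤ lam j) ∧ (∀ j, v j ∈ S) ∧ z = ∑ j, lam j • monoVec d (v j)}

/-- `⌈t/2⌉` for a natural number `t`. -/
def ceilHalf (t : ℕ) : ℕ := (t + 1) / 2

/-- The objective `f(x) = ∑ᵢ aᵢ log pᵢ(x)` (with `log 0 = -∞`). -/
def fObj {n m : ℕ} (a : Fin m → ℝ) (p : Fin m → MvPolynomial (Fin n) ℝ)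
    (x : Fin n → ℝ) : EReal :=
  ∑ i, (a i : EReal) * elog (eval x (p i))

/-- `f_max`, the optimal value of the log-polynomial optimization problem. -/
def fMax {n m : ℕ} (a : Fin m → ℝ) (p : Fin m → MvPolynomial (Fin n) ℝ)
    (K : Set (Fin n → ℝ)) : EReal :=
  sSup (fObj a p '' K)

/-- The moment objective `∑ᵢ aᵢ log ⟨pᵢ, z⟩`. -/
def objVal {n m : ℕ} (a : Fin m → ℝ) (p : Fin m → MvPolynomial (Fin n) ℝ)
    (z : (Fin n →₀ ℕ) → ℝ) : EReal :=
  ∑ i, (a i : EReal) * elog (pairing (p i) z)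

/-- `f_mom`, the optimal value of the convex relaxation over `R_d(S) ∩ {z₀ = 1}`. -/
def fMom {n m : ℕ} (d : ℕ) (a : Fin m → ℝ) (p : Fin m → MvPolynomial (Fin n) ℝ)
    (S : Set (Fin n → ℝ)) : EReal :=
  sSup (objVal a p '' {z ∈ momentCone d S | z 0 = 1})

/-- `M_k[y] ⪰ 0`, encoded via quadratic forms whose coefficient vectors are
coefficient vectors of polynomials of degree at most `k`. -/
def momMatPSD {n : ℕ} (k : ℕ) (y : (Fin n →₀ ℕ) → ℝ) : Prop :=
  ∀ q : MvPolynomial (Fin n) ℝ, q.totalDegree ≤ k →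
    0 ≤ ∑ α ∈ q.support, ∑ β ∈ q.support, q.coeff α * q.coeff β * y (α + β)

/-- The `(α,β)` entry of the localizing matrix `L_c^{(k)}[y]`. -/
def locEntry {n : ℕ} (c : MvPolynomial (Fin n) ℝ) (y : (Fin n →₀ ℕ) → ℝ)
    (α β : Fin n →₀ ℕ) : ℝ :=
  ∑ γ ∈ c.support, c.coeff γ * y (γ + α + β)

/-- `L_c^{(k)}[y] = 0`. -/
def locMatZero {n : ℕ} (c : MvPolynomial (Fin n) ℝ) (k : ℕ)
    (y : (Fin n →₀ ℕ) → ℝ) : Prop :=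
  ∀ α β : Fin n →₀ ℕ, mdeg α ≤ k - ceilHalf c.totalDegree →
    mdeg β ≤ k - ceilHalf c.totalDegree → locEntry c y α β = 0

/-- `L_c^{(k)}[y] ⪰ 0`. -/
def locMatPSD {n : ℕ} (c : MvPolynomial (Fin n) ℝ) (k : ℕ)
    (y : (Fin n →₀ ℕ) → ℝ) : Prop :=
  ∀ q : MvPolynomial (Fin n) ℝ, q.totalDegree ≤ k - ceilHalf c.totalDegree →
    0 ≤ ∑ α ∈ q.support, ∑ β ∈ q.support, q.coeff α * q.coeff β * locEntry c y α β

/-- Feasibility for the `k`-th order moment relaxation with equality constraint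
polynomials `Eqs` and inequality constraint polynomials `Ineqs`. -/
def momFeasible {n : ℕ} (Eqs Ineqs : Set (MvPolynomial (Fin n) ℝ)) (k : ℕ)
    (y : (Fin n →₀ ℕ) → ℝ) : Prop :=
  y 0 = 1 ∧ momMatPSD k y ∧ (∀ c ∈ Eqs, locMatZero c k y) ∧ ∀ c ∈ Ineqs, locMatPSD c k y

/-- `f_mom,k`, the optimal value of the `k`-th order moment relaxation. -/
def fMomK {n m : ℕ} (a : Fin m → ℝ) (p : Fin m → MvPolynomial (Fin n) ℝ)
    (Eqs Ineqs : Set (MvPolynomial (Fin n) ℝ)) (k : ℕ) : EReal :=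
  sSup (objVal a p '' {y | momFeasible Eqs Ineqs k y})

/-- The value `f_γ` of the γ-program. -/
def fGamma {n m : ℕ} (a : Fin m → ℝ) (p : Fin m → MvPolynomial (Fin n) ℝ)
    (K : Set (Fin n → ℝ)) : EReal :=
  sInf {e : EReal | ∃ γ : Fin m → ℝ,
    (∀ i, ∀ x ∈ K, (a i : EReal) * elog (eval x (p i)) ≤ ((γ i : ℝ) : EReal)) ∧
    e = ((∑ i, γ i : ℝ) : EReal)}

/-- A polynomial is a sum of squares. -/
def IsSOSPoly {n : ℕ} (σ : MvPolynomial (Fin n) ℝ) : Prop :=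
  ∃ (t : ℕ) (r : Fin t → MvPolynomial (Fin n) ℝ), σ = ∑ j, (r j) ^ 2

/-- The set `Ideal[c_E] + QM[c_I]`. -/
def idealQM {n : ℕ} {ι : Type*} (E I : Finset ι) (c : ι → MvPolynomial (Fin n) ℝ) :
    Set (MvPolynomial (Fin n) ℝ) :=
  {q | ∃ (h : ι → MvPolynomial (Fin n) ℝ) (σ0 : MvPolynomial (Fin n) ℝ)
      (σ : ι → MvPolynomial (Fin n) ℝ),
    IsSOSPoly σ0 ∧ (∀ j ∈ I, IsSOSPoly (σ j)) ∧
    q = (∑ j ∈ E, h j * c j) + σ0 + ∑ j ∈ I, σ j * c j}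


/-!
An element `z` of `R_d(K)` with `z₀ = 1` is a convex combination `∑ λⱼ [vⱼ]_{2d}` with `vⱼ ∈ K`,
so `⟨p₁, z⟩ = ∑ λⱼ p₁(vⱼ)` is at most the largest `p₁(vⱼ)`; since `a₁ log` is monotone this gives
`f_mom ≤ f_max`. Conversely each `[x]_{2d}` with `x ∈ K` is feasible and `⟨p₁, [x]_{2d}⟩ = p₁(x)`.
With several polynomials the first step fails, as the maximizing `vⱼ` depends on the polynomial.
-/

lemma elog_mono : Monotone elog := by
  intro s t h
  unfold elog
  split_ifs with hs ht
  · exact EReal.coe_le_coe_iff.2 (Real.log_le_log hs h)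
  · exact absurd (hs.trans_le h) ht
  · exact bot_le
  · exact le_rfl

lemma le_two_mul_ceilHalf (t : ℕ) : t ≤ 2 * ceilHalf t := by
  unfold ceilHalf; omega

lemma monoVec_zero {n : ℕ} (d : ℕ) (x : Fin n → ℝ) : monoVec d x 0 = 1 := by
  simp [monoVec, mdeg]

lemma pairing_monoVec {n d : ℕ} {p : MvPolynomial (Fin n) ℝ} (hp : p.totalDegree ≤ 2 * d)
    (x : Fin n → ℝ) : pairing p (monoVec d x) = eval x p := by
  rw [eval_eq', pairing]
  refine Finset.sum_congr rfl fun α hα => ?_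
  have hα : mdeg α ≤ 2 * d := by
    refine le_trans ?_ hp
    simpa [mdeg, Finsupp.sum_fintype] using le_totalDegree hα
  rw [monoVec, if_pos hα]

lemma pairing_sum_smul {n : ℕ} {ι : Type*} (s : Finset ι) (p : MvPolynomial (Fin n) ℝ)
    (w : ι → ℝ) (z : ι → (Fin n →₀ ℕ) → ℝ) :
    pairing p (∑ j ∈ s, w j • z j) = ∑ j ∈ s, w j * pairing p (z j) := by
  simp only [pairing, Finset.sum_apply, Pi.smul_apply, smul_eq_mul, Finset.mul_sum]
  rw [Finset.sum_comm]
  exact Finset.sum_congr rfl fun _ _ => Finset.sum_congr rfl fun _ _ => by ring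

lemma monoVec_mem_momentCone {n d : ℕ} {S : Set (Fin n → ℝ)} {x : Fin n → ℝ}
    (hx : x ∈ S) : monoVec d x ∈ momentCone d S :=
  ⟨1, fun _ => 1, fun _ => x, fun _ => zero_le_one, fun _ => hx, by simp⟩

lemma exists_le_of_sum_weights_eq_one {ι : Type*} [Fintype ι] {w f : ι → ℝ}
    (hw₀ : ∀ i, 0 ≤ w i) (hw₁ : ∑ i, w i = 1) : ∃ i, ∑ j, w j * f j ≤ f i := by
  have hle := Finset.centerMass_le_sup (s := Finset.univ) (f := f) (fun i _ => hw₀ i)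
    (hw₁ ▸ one_pos)
  obtain ⟨i, -, hi⟩ := Finset.exists_mem_eq_sup' _ f
  rw [Finset.centerMass_eq_of_sum_1 _ _ hw₁, hi] at hle
  exact ⟨i, hle⟩

lemma exists_mem_pairing_le_eval {n d : ℕ} {S : Set (Fin n → ℝ)} {z : (Fin n →₀ ℕ) → ℝ}
    (hz : z ∈ momentCone d S) (hz0 : z 0 = 1) {p : MvPolynomial (Fin n) ℝ}
    (hp : p.totalDegree ≤ 2 * d) : ∃ x ∈ S, pairing p z ≤ eval x p := by
  obtain ⟨l, lam, v, hlam, hv, rfl⟩ := hz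
  have hsum : ∑ j, lam j = 1 := by
    simpa [Finset.sum_apply, monoVec_zero] using hz0
  obtain ⟨j, hj⟩ := exists_le_of_sum_weights_eq_one (f := fun j => eval (v j) p) hlam hsum
  refine ⟨v j, hv j, ?_⟩
  simpa only [pairing_sum_smul, pairing_monoVec hp] using hj

lemma objVal_monoVec {n m d : ℕ} (a : Fin m → ℝ) {p : Fin m → MvPolynomial (Fin n) ℝ}
    (hp : ∀ i, (p i).totalDegree ≤ 2 * d) (x : Fin n → ℝ) :
    objVal a p (monoVec d x) = fObj a p x := by
  simp only [objVal, fObj, pairing_monoVec (hp _)]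

lemma fMax_le_fMom {n m d : ℕ} (a : Fin m → ℝ) {p : Fin m → MvPolynomial (Fin n) ℝ}
    (hp : ∀ i, (p i).totalDegree ≤ 2 * d) (S : Set (Fin n → ℝ)) :
    fMax a p S ≤ fMom d a p S := by
  refine sSup_le ?_
  rintro _ ⟨x, hx, rfl⟩
  rw [← objVal_monoVec a hp]
  exact le_sSup ⟨_, ⟨monoVec_mem_momentCone hx, monoVec_zero d x⟩, rfl⟩

lemma fMom_le_fMax_of_single {n d : ℕ} {a : ℝ} (ha : 0 ≤ a) {p : MvPolynomial (Fin n) ℝ}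
    (hp : p.totalDegree ≤ 2 * d) (S : Set (Fin n → ℝ)) :
    fMom d (fun _ : Fin 1 => a) (fun _ : Fin 1 => p) S ≤
      fMax (fun _ : Fin 1 => a) (fun _ : Fin 1 => p) S := by
  refine sSup_le ?_
  rintro _ ⟨z, ⟨hz, hz0⟩, rfl⟩
  obtain ⟨x, hx, hzx⟩ := exists_mem_pairing_le_eval hz hz0 hp
  calc objVal (fun _ : Fin 1 => a) (fun _ : Fin 1 => p) z
      = (a : EReal) * elog (pairing p z) := by simp [objVal]
    _ ≤ (a : EReal) * elog (eval x p) :=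
        mul_le_mul_of_nonneg_left (elog_mono hzx) (EReal.coe_nonneg.2 ha)
    _ = fObj (fun _ : Fin 1 => a) (fun _ : Fin 1 => p) x := by simp [fObj]
    _ ≤ _ := le_sSup (Set.mem_image_of_mem _ hx)

theorem fMom_eq_fMax_of_single_polynomial_general
    {n : ℕ} {ι : Type*} [DecidableEq ι]
    (E I : Finset ι)
    (c : ι → MvPolynomial (Fin n) ℝ)
    (K : Set (Fin n → ℝ))
    (a1 : ℝ) (ha1 : 0 < a1)
    (p1 : MvPolynomial (Fin n) ℝ)
    (d : ℕ)
    (hd : d = ceilHalf p1.totalDegree ⊔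
      ((E ∪ I).sup fun j => ceilHalf (c j).totalDegree)) :
    fMom d (fun _ : Fin 1 => a1) (fun _ : Fin 1 => p1) K =
      fMax (fun _ : Fin 1 => a1) (fun _ : Fin 1 => p1) K := by
  have hdeg : p1.totalDegree ≤ 2 * d :=
    (le_two_mul_ceilHalf _).trans (Nat.mul_le_mul_left 2 (hd ▸ le_sup_left))
  exact le_antisymm (fMom_le_fMax_of_single ha1.le hdeg K)
    (fMax_le_fMom _ (fun _ => hdeg) K)

/-- **Corollary 3.3.**  If `m = 1` and `K ≠ ∅`, the convex
relaxation is tight: `f_mom = f_max`. -/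
theorem fMom_eq_fMax_of_single_polynomial
    {n : ℕ} {ι : Type*} [DecidableEq ι]
    (E I : Finset ι) (hEI : Disjoint E I)
    (c : ι → MvPolynomial (Fin n) ℝ)
    (K : Set (Fin n → ℝ))
    (hK : K = {x | (∀ j ∈ E, eval x (c j) = 0) ∧ ∀ j ∈ I, 0 ≤ eval x (c j)})
    (hKne : K.Nonempty)
    (a1 : ℝ) (ha1 : 0 < a1)
    (p1 : MvPolynomial (Fin n) ℝ)
    (hp1 : ∀ x ∈ K, 0 ≤ eval x p1)
    (d : ℕ)
    (hd : d = ceilHalf p1.totalDegree ⊔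
      ((E ∪ I).sup fun j => ceilHalf (c j).totalDegree)) :
    fMom d (fun _ : Fin 1 => a1) (fun _ : Fin 1 => p1) K =
      fMax (fun _ : Fin 1 => a1) (fun _ : Fin 1 => p1) K :=
  fMom_eq_fMax_of_single_polynomial_general E I c K a1 ha1 p1 d hd

end
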